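/- arXiv:2002.05477 — 9 statements merged into one kernel-verified Lean document; each statement's English description precedes it below -/
import Mathlib

section
/- For all 0 ≤ b₁ ≤ b₂ and 0 ≤ r₁ ≤ r₂, we have f(b₁,r₁,1) − f(b₁,r₁,0) ≥ f(b₂,r₂,1) − f(b₂,r₂,0) ≥ 0. -/
def deltaR (K h b r : ℤ) : ℤ :=
  if b ≤ h + r then K - 1 + h - b
  else if b ≤ h + 2 * (K - 2) - r then K - 1 - ⌈((r + b - h : ℤ) : ℚ) / 2⌉
  else 0

def deltaB (K h b : ℤ) (p : ℕ) : ℤ :=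
  if p = 0 then deltaR K h b 0
  else
    if b ≤ h then K - 1
    else if b ≤ h + 2 * (K - 2) then K - 1 - ⌈((b - h : ℤ) : ℚ) / 2⌉
    else 0

def fCard (K h : ℤ) (b r p : ℕ) : ℤ :=
  (if p = 0 then 0 else h * (h + 1) / 2) +
    (∑ j ∈ Finset.range b, deltaB K h (j : ℤ) p) +
    (∑ i ∈ Finset.range r, deltaR K h (b : ℤ) (i : ℤ))

lemma deltaB_diff (K h : ℤ) (j : ℤ) :
    deltaB K h j 0 - deltaB K h j 1 = max (h - j) 0 := by
  simp only [deltaB, deltaR, if_pos rfl, add_zero, sub_zero, zero_add, one_ne_zero, if_false]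
  split_ifs <;> simp_all <;> omega

lemma sum_max (h : ℤ) (hh : 0 ≤ h) (b : ℕ) :
    2 * (∑ j ∈ Finset.range b, max (h - (j:ℤ)) 0) +
      (max (h - (b:ℤ)) 0) * (max (h - (b:ℤ)) 0 + 1) = h * (h + 1) := by
  induction b with
  | zero => simp [max_eq_left hh]
  | succ n ih =>
    rw [Finset.sum_range_succ]
    push_cast
    rcases le_or_gt (h - (n:ℤ)) 0 with hc | hc
    · rw [max_eq_right hc, max_eq_right (by omega : h - ((n:ℤ)+1) ≤ 0)] at *
      linarith
    · rw [max_eq_left (by omega : (0:ℤ) ≤ h - n), max_eq_left (by omega : (0:ℤ) ≤ h - ((n:ℤ)+1))]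
      rw [max_eq_left (by omega : (0:ℤ) ≤ h - n)] at ih
      nlinarith [ih]

lemma fCard_diff (K h : ℤ) (b r : ℕ) :
    fCard K h b r 1 - fCard K h b r 0
      = h * (h + 1) / 2 - ∑ j ∈ Finset.range b, max (h - (j:ℤ)) 0 := by
  simp only [fCard]
  norm_num
  have : ∑ j ∈ Finset.range b, max (h - (j:ℤ)) 0
      = ∑ j ∈ Finset.range b, (deltaB K h (j:ℤ) 0 - deltaB K h (j:ℤ) 1) := by
    exact Finset.sum_congr rfl fun j _ => (deltaB_diff K h j).symm
  rw [this, Finset.sum_sub_distrib]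
  ring

theorem fCard_purple_marginal (K h : ℤ) (hK : 1 ≤ K) (hKh : K ≤ h)
    (b₁ b₂ r₁ r₂ : ℕ) (hb : b₁ ≤ b₂) (hr : r₁ ≤ r₂) :
    fCard K h b₂ r₂ 1 - fCard K h b₂ r₂ 0 ≤ fCard K h b₁ r₁ 1 - fCard K h b₁ r₁ 0 ∧
    0 ≤ fCard K h b₂ r₂ 1 - fCard K h b₂ r₂ 0 := by
  have hh : (0:ℤ) ≤ h := by omega
  rw [fCard_diff, fCard_diff]
  constructor
  · have : ∑ j ∈ Finset.range b₁, max (h - (j:ℤ)) 0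
        ≤ ∑ j ∈ Finset.range b₂, max (h - (j:ℤ)) 0 := by
      apply Finset.sum_le_sum_of_subset_of_nonneg (Finset.range_subset_range.mpr hb)
      intro j _ _; exact le_max_right _ _
    omega
  · have hs := sum_max h hh b₂
    have h2 : 2 * (h * (h + 1) / 2) = h * (h + 1) :=
      Int.mul_ediv_cancel' ((Int.even_mul_succ_self h).two_dvd)
    nlinarith [mul_nonneg (le_max_right (h - (b₂:ℤ)) 0)
      (by positivity : (0:ℤ) ≤ max (h - (b₂:ℤ)) 0 + 1)]
end

section
/- For all b ≥ 0 and r ≥ 0, we have f(b+1,r,0) − f(b,r,0) ≥ f(b+1,r,1) − f(b,r,1). -/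
theorem fCard_blue_marginal_purple (K h : ℤ) (hK : 1 ≤ K) (hKh : K ≤ h) (b r : ℕ) :
    fCard K h (b + 1) r 1 - fCard K h b r 1 ≤ fCard K h (b + 1) r 0 - fCard K h b r 0 := by
  have key : deltaB K h (b : ℤ) 1 ≤ deltaB K h (b : ℤ) 0 := by
    have hb : (0 : ℤ) ≤ (b : ℤ) := Int.ofNat_nonneg b
    simp only [deltaB, deltaR]
    norm_num
    split_ifs <;> omega
  simp only [fCard, Finset.sum_range_succ]
  push_cast
  linarith
end

section
/- The ratio max{hK + (K-1)K/2, (K-1)² + h(h+1)/2} / ((K-1)(h+K-1) + h(h+1)/2), minimized over positive integers h ≥ K, converges to 2/(2+√2) as K → ∞. -/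
/-!
Write `a = K - 1`. The identity
`(2 + √2) (a² + h(h+1)/2) - 2 (a(h + a) + h(h+1)/2) = √2 ((√2 a - h)² + h) / 2`
shows that the second entry of the maximum alone already makes every ratio at least
`2 / (2 + √2)`. Numerator and denominator are homogeneous of degree two up to lower-order
terms, so at `h = ⌈√2 K⌉` the ratio tends to its value at `K = 1, h = √2` with those terms
dropped, which is exactly `2 / (2 + √2)`.
-/

open Filter Topology Real

noncomputable def ratio (K h : ℝ) : ℝ :=
  max (h * K + (K - 1) * K / 2) ((K - 1) ^ 2 + h * (h + 1) / 2) /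
    ((K - 1) * (h + K - 1) + h * (h + 1) / 2)

lemma ratio_denominator_pos {K h : ℝ} (hK : 1 ≤ K) (hh : 0 < h) :
    0 < (K - 1) * (h + K - 1) + h * (h + 1) / 2 := by
  have : 0 ≤ (K - 1) * (h + K - 1) := mul_nonneg (by linarith) (by linarith)
  nlinarith

lemma two_mul_le_two_add_sqrt_two_mul (a h : ℝ) (hh : 0 ≤ h) :
    2 * (a * (h + a) + h * (h + 1) / 2) ≤ (2 + √2) * (a ^ 2 + h * (h + 1) / 2) := by
  have hs : √2 ^ 2 = 2 := sq_sqrt zero_le_two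
  have key : (2 + √2) * (a ^ 2 + h * (h + 1) / 2) - 2 * (a * (h + a) + h * (h + 1) / 2) =
      √2 * ((√2 * a - h) ^ 2 + h) / 2 := by
    linear_combination (a * h - a ^ 2 * √2 / 2) * hs
  have : 0 ≤ √2 * ((√2 * a - h) ^ 2 + h) / 2 := by positivity
  linarith

lemma two_div_two_add_sqrt_two_le_ratio {K h : ℝ} (hK : 1 ≤ K) (hh : 0 < h) :
    2 / (2 + √2) ≤ ratio K h := by
  have hD := ratio_denominator_pos hK hh
  calc 2 / (2 + √2) ≤ ((K - 1) ^ 2 + h * (h + 1) / 2) /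
        ((K - 1) * (h + K - 1) + h * (h + 1) / 2) := by
        rw [div_le_div_iff₀ (by positivity) hD]
        have := two_mul_le_two_add_sqrt_two_mul (K - 1) h hh.le
        rw [show h + K - 1 = h + (K - 1) by ring]
        linarith
    _ ≤ ratio K h := div_le_div_of_nonneg_right (le_max_right _ _) hD.le

noncomputable def scaledRatio (ε c : ℝ) : ℝ :=
  max (c + (1 - ε) / 2) ((1 - ε) ^ 2 + c * (c + ε) / 2) /
    ((1 - ε) * (c + 1 - ε) + c * (c + ε) / 2)

lemma ratio_eq_scaledRatio {K : ℝ} (hK : K ≠ 0) (h : ℝ) :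
    ratio K h = scaledRatio K⁻¹ (h / K) := by
  have hK2 : 0 < K ^ 2 := by positivity
  rw [scaledRatio, ← mul_div_mul_right _ _ hK2.ne', max_mul_of_nonneg _ _ hK2.le, ratio]
  congr 2 <;> field_simp

lemma continuousAt_scaledRatio :
    ContinuousAt (fun p : ℝ × ℝ => scaledRatio p.1 p.2) (0, √2) := by
  unfold scaledRatio
  refine ContinuousAt.div (by fun_prop) (by fun_prop) ?_
  simp only [sub_zero, add_zero, one_mul]
  positivity

lemma scaledRatio_zero_sqrt_two : scaledRatio 0 √2 = 2 / (2 + √2) := by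
  have hs : √2 * √2 = 2 := mul_self_sqrt zero_le_two
  have hmax : √2 + 1 / 2 ≤ 1 + √2 * √2 / 2 := by nlinarith [sq_nonneg (√2 - 3 / 2)]
  simp only [scaledRatio, sub_zero, add_zero, one_pow, one_mul]
  rw [max_eq_right hmax, hs]
  ring

lemma tendsto_ratio_ceil_sqrt_two_mul :
    Tendsto (fun K : ℝ => ratio K ⌈√2 * K⌉₊) atTop (𝓝 (2 / (2 + √2))) := by
  have hpair : Tendsto (fun K : ℝ => (K⁻¹, (⌈√2 * K⌉₊ : ℝ) / K)) atTop (𝓝 (0, √2)) :=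
    tendsto_inv_atTop_zero.prodMk_nhds (tendsto_nat_ceil_mul_div_atTop (sqrt_nonneg 2))
  rw [← scaledRatio_zero_sqrt_two]
  refine (continuousAt_scaledRatio.tendsto.comp hpair).congr' ?_
  filter_upwards [eventually_ne_atTop 0] with K hK
  exact (ratio_eq_scaledRatio hK _).symm

lemma le_ceil_sqrt_two_mul (K : ℕ) : K ≤ ⌈√2 * K⌉₊ :=
  Nat.cast_le.mp <| (le_mul_of_one_le_left K.cast_nonneg (one_le_sqrt.mpr one_le_two)).trans
    (Nat.le_ceil _)

theorem ratio_limit :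
    Filter.Tendsto (fun K : ℕ =>
      sInf { x : ℝ | ∃ h : ℕ, K ≤ h ∧
        x = max ((h : ℝ) * K + ((K : ℝ) - 1) * K / 2)
                (((K : ℝ) - 1) ^ 2 + (h : ℝ) * (h + 1) / 2) /
            (((K : ℝ) - 1) * ((h : ℝ) + K - 1) + (h : ℝ) * (h + 1) / 2) })
      Filter.atTop (nhds (2 / (2 + Real.sqrt 2))) := by
  have hlower : ∀ K : ℕ, 1 ≤ K → ∀ h : ℕ, K ≤ h → 2 / (2 + √2) ≤ ratio K h :=
    fun K hK h hh => two_div_two_add_sqrt_two_le_ratio (by exact_mod_cast hK)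
      (by exact_mod_cast hK.trans hh)
  refine tendsto_of_tendsto_of_tendsto_of_le_of_le' tendsto_const_nhds
    (tendsto_ratio_ceil_sqrt_two_mul.comp tendsto_natCast_atTop_atTop) ?_ ?_
  all_goals filter_upwards [eventually_ge_atTop 1] with K hK
  · refine le_csInf ⟨_, _, le_ceil_sqrt_two_mul K, rfl⟩ ?_
    rintro x ⟨h, hh, rfl⟩
    exact hlower K hK h hh
  · refine csInf_le ⟨2 / (2 + √2), ?_⟩ ⟨_, le_ceil_sqrt_two_mul K, rfl⟩
    rintro x ⟨h, hh, rfl⟩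
    exact hlower K hK h hh
end

section
/- For each t with 1 ≤ t ≤ K, the function f_t is monotone non-decreasing in each of its arguments r_{K-(t-1)},…,r_K ∈ {0,1} and b_{K-(t-1)},…,b_K ≥ 0. -/
/-- The hard function `f_t` for the matroid lower bound. The arguments `r b : ℕ → ℕ`
give, for each class `i ∈ {1, …, K}`, the number `r i ∈ {0,1}` of red elements and the
number `b i` of blue elements of class `i` in the set (only indices
`K-(t-1), …, K` are relevant for `f_t`). With `b̂ i = min (b i) (2(K-i))`,
`m_t = (2t-1)!`, `δ_{t-1} = m_{t-1} - f_{t-1}(r; b̂)`, `d_t = 2(t-1) - b̂ (K-(t-1))`,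
`s_t = 1 - r (K-(t-1))`, and `a_t = 2 m_{t-1} s_t + δ_{t-1} (d_t - 1)`,
we have `f_1(r; b) = r K` and `f_t(r; b) = m_t - a_t * d_t` for `t ≥ 2`. -/
def fMat (K : ℕ) : ℕ → (ℕ → ℕ) → (ℕ → ℕ) → ℤ
  | 0, _, _ => 0
  | 1, r, _ => (r K : ℤ)
  | (t + 2), r, b =>
    let bh : ℕ → ℕ := fun i => min (b i) (2 * (K - i))
    let δ : ℤ := (Nat.factorial (2 * (t + 1) - 1) : ℤ) - fMat K (t + 1) r bh
    let d : ℤ := 2 * ((t : ℤ) + 1) - (bh (K - (t + 1)) : ℤ)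
    let s : ℤ := 1 - (r (K - (t + 1)) : ℤ)
    (Nat.factorial (2 * (t + 2) - 1) : ℤ) -
      (2 * (Nat.factorial (2 * (t + 1) - 1) : ℤ) * s + δ * (d - 1)) * d

/-!
Induction on `t`, carrying the bound `f_t ≤ m_t` along. Writing `f_t = m_t - a_t d_t`, the
penalty `a_t d_t = (2 m_{t-1} s_t + δ_{t-1} (d_t - 1)) d_t` is monotone in `s_t`, `δ_{t-1}`
and `d_t` as long as these are nonnegative. Raising `r` or `b` lowers all three (`δ_{t-1}` by
induction, `d_t` because capping is monotone), so `f_t` goes up. The bound `f_{t-1} ≤ m_{t-1}`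
is what keeps `δ_{t-1}` nonnegative, and `b̂_{K-(t-1)} ≤ 2(t-1)` keeps `d_t` nonnegative.
-/

/-- The quantity `a_t · d_t` subtracted from `m_t` in the definition of `f_t`. -/
def penalty (m δ d s : ℤ) : ℤ := (2 * m * s + δ * (d - 1)) * d

theorem penalty_le_penalty {m δ δ' d d' s s' : ℤ} (hm : 0 ≤ m) (hδ' : 0 ≤ δ') (hδ : δ' ≤ δ)
    (hd' : 0 ≤ d') (hd : d' ≤ d) (hs' : 0 ≤ s') (hs : s' ≤ s) :
    penalty m δ' d' s' ≤ penalty m δ d s := by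
  unfold penalty
  have hd0 : 0 ≤ d := hd'.trans hd
  -- both products are nonnegative only because `d` and `d'` are integers
  have hdd : 0 ≤ (d - 1) * d := by
    rcases hd0.eq_or_lt with h | h
    · simp [← h]
    · exact mul_nonneg (by omega) hd0
  have hdd' : 0 ≤ (d - d') * (d + d' - 1) := by
    rcases hd.eq_or_lt with h | h
    · simp [h]
    · exact mul_nonneg (by omega) (by omega)
  nlinarith [mul_nonneg hδ' hdd', mul_nonneg (sub_nonneg.2 hδ) hdd,
    mul_nonneg (mul_nonneg hm (sub_nonneg.2 hs)) hd0,
    mul_nonneg (mul_nonneg hm hs') (sub_nonneg.2 hd)]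

theorem penalty_nonneg {m δ d s : ℤ} (hm : 0 ≤ m) (hδ : 0 ≤ δ) (hd : 0 ≤ d) (hs : 0 ≤ s) :
    0 ≤ penalty m δ d s := by
  simpa [penalty] using
    penalty_le_penalty (δ' := 0) (d' := 0) (s' := 0) hm le_rfl hδ le_rfl hd le_rfl hs

def capBlue (K : ℕ) (b : ℕ → ℕ) (i : ℕ) : ℕ := min (b i) (2 * (K - i))

theorem capBlue_mono (K : ℕ) : Monotone (capBlue K) :=
  fun _ _ hbb' i => min_le_min_right _ (hbb' i)

theorem capBlue_sub_le (K : ℕ) (b : ℕ → ℕ) (t : ℕ) : capBlue K b (K - t) ≤ 2 * t := by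
  unfold capBlue; omega

theorem fMat_add_two (K t : ℕ) (r b : ℕ → ℕ) :
    fMat K (t + 2) r b = ((2 * (t + 2) - 1).factorial : ℤ) -
      penalty ((2 * (t + 1) - 1).factorial)
        ((2 * (t + 1) - 1).factorial - fMat K (t + 1) r (capBlue K b))
        (2 * ((t : ℤ) + 1) - capBlue K b (K - (t + 1))) (1 - r (K - (t + 1))) :=
  rfl

theorem fMat_le_factorial (K : ℕ) :
    ∀ t (r b : ℕ → ℕ), (∀ i, r i ≤ 1) → fMat K t r b ≤ ((2 * t - 1).factorial : ℤ)
  | 0, _, _, _ => by simp [fMat]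
  | 1, r, _, hr => by simpa [fMat] using hr K
  | t + 2, r, b, hr => by
    have ih := fMat_le_factorial K (t + 1) r (capBlue K b) hr
    have hcap := capBlue_sub_le K b (t + 1)
    have hrK := hr (K - (t + 1))
    rw [fMat_add_two, sub_le_self_iff]
    exact penalty_nonneg (by positivity) (by linarith) (by omega) (by omega)

theorem fMat_mono (K : ℕ) :
    ∀ t (r r' b b' : ℕ → ℕ), r ≤ r' → (∀ i, r' i ≤ 1) → b ≤ b' →
      fMat K t r b ≤ fMat K t r' b'
  | 0, _, _, _, _, _, _, _ => le_rfl
  | 1, _, _, _, _, hrr', _, _ => by simpa [fMat] using hrr' K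
  | t + 2, r, r', b, b', hrr', hr', hbb' => by
    have ih := fMat_mono K (t + 1) r r' _ _ hrr' hr' (capBlue_mono K hbb')
    have hbound := fMat_le_factorial K (t + 1) r' (capBlue K b') hr'
    have hcap := capBlue_sub_le K b' (t + 1)
    have hcap_mono : capBlue K b (K - (t + 1)) ≤ capBlue K b' (K - (t + 1)) :=
      capBlue_mono K hbb' _
    have hr'K := hr' (K - (t + 1))
    have hrr'K : r (K - (t + 1)) ≤ r' (K - (t + 1)) := hrr' _
    rw [fMat_add_two, fMat_add_two, sub_le_sub_iff_left]
    exact penalty_le_penalty (by positivity) (by linarith) (by linarith) (by omega) (by omega)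
      (by omega) (by omega)

theorem fMat_monotone_general (K t : ℕ)
    (r r' b b' : ℕ → ℕ) (hrr' : ∀ i, r i ≤ r' i) (hr' : ∀ i, r' i ≤ 1)
    (hbb' : ∀ i, b i ≤ b' i) :
    fMat K t r b ≤ fMat K t r' b' :=
  fMat_mono K t r r' b b' hrr' hr' hbb'

theorem fMat_monotone (K t : ℕ) (ht1 : 1 ≤ t) (htK : t ≤ K)
    (r r' b b' : ℕ → ℕ) (hrr' : ∀ i, r i ≤ r' i) (hr' : ∀ i, r' i ≤ 1)
    (hbb' : ∀ i, b i ≤ b' i) :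
    fMat K t r b ≤ fMat K t r' b' :=
  fMat_monotone_general K t r r' b b' hrr' hr' hbb'
end

section
/- For each t with 1 ≤ t ≤ K, we have f_t(0,…,0,1; 1,…,1,0) = t·(2t-2)!, where all r-arguments are 0 except the last which is 1, and all b-arguments are 1 except the last which is 0. -/
lemma hat_fix (K i : ℕ) :
    min (if K ≤ i then 0 else 1) (2 * (K - i)) = if K ≤ i then 0 else 1 := by
  rcases le_or_gt K i with h | h
  · simp [h, Nat.sub_eq_zero_of_le h]
  · rw [if_neg (not_le.2 h)]
    exact Nat.min_eq_left (by omega)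

lemma hat_orig (K i : ℕ) :
    min (if i = K then 0 else 1) (2 * (K - i)) = if K ≤ i then 0 else 1 := by
  rcases le_or_gt K i with h | h
  · rcases eq_or_lt_of_le h with rfl | h'
    · simp
    · rw [if_neg (by omega : ¬ i = K), if_pos h, Nat.sub_eq_zero_of_le h]
      simp
  · rw [if_neg (by omega : ¬ i = K), if_neg (not_le.2 h)]
    exact Nat.min_eq_left (by omega)

lemma fMat_aux (K : ℕ) : ∀ t, 1 ≤ t → t ≤ K →
    fMat K t (fun i => if i = K then 1 else 0) (fun j => if K ≤ j then 0 else 1) =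
      (t : ℤ) * (Nat.factorial (2 * t - 2) : ℤ) := by
  intro t
  induction t with
  | zero => omega
  | succ n ih =>
    match n, ih with
    | 0, _ => intro _ _; simp [fMat]
    | Nat.succ m, ih =>
      intro _ hK
      have ih' := ih (by omega) (by omega)
      show fMat K (m + 2) _ _ = _
      rw [fMat]
      simp only [hat_fix]
      rw [show (fun i => if K ≤ i then 0 else 1 : ℕ → ℕ) =
        (fun j => if K ≤ j then 0 else 1 : ℕ → ℕ) from rfl, ih']
      have hrk : ¬ (K - (m + 1) = K) := by omega
      have hbk : ¬ (K ≤ K - (m + 1)) := by omega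
      rw [if_neg hrk, if_neg hbk]
      have e1 : 2 * (m + 1) - 1 = 2 * m + 1 := by omega
      have e2 : 2 * (m + 1) - 2 = 2 * m := by omega
      have e3 : 2 * (m + 2) - 1 = 2 * m + 3 := by omega
      have e4 : 2 * (m + 2) - 2 = 2 * m + 2 := by omega
      rw [e1, e2, e3, e4]
      have f1 : (Nat.factorial (2 * m + 1) : ℤ) = (2 * m + 1) * Nat.factorial (2 * m) := by
        push_cast [Nat.factorial_succ]; ring
      have f2 : (Nat.factorial (2 * m + 2) : ℤ) = (2 * m + 2) * Nat.factorial (2 * m + 1) := by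
        push_cast [Nat.factorial_succ]; ring
      have f3 : (Nat.factorial (2 * m + 3) : ℤ) = (2 * m + 3) * Nat.factorial (2 * m + 2) := by
        push_cast [Nat.factorial_succ]; ring
      rw [f3, f2, f1]
      push_cast
      ring

theorem fMat_output_value (K t : ℕ) (ht1 : 1 ≤ t) (htK : t ≤ K) :
    fMat K t (fun i => if i = K then 1 else 0) (fun i => if i = K then 0 else 1) =
      (t : ℤ) * (Nat.factorial (2 * t - 2) : ℤ) := by
  match t, ht1 with
  | 1, _ => simp [fMat]
  | Nat.succ (Nat.succ m), _ =>
    have key := fMat_aux K (m + 2) (by omega) (by omega)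
    rw [fMat] at key ⊢
    simp only [hat_orig, hat_fix] at key ⊢
    exact key
end

section
/- For each t with 2 ≤ t ≤ K and every nonnegative integer b, we have f_t(1, 0, …, 0; b, 0, …, 0) = f_t(0, 0, …, 0; b+1, 0, …, 0) (adding the red element of the first class is indistinguishable from adding one more blue element of that class). -/
lemma fMat_congr (K : ℕ) : ∀ t (r r' b b' : ℕ → ℕ),
    (∀ j, j < t → r (K - j) = r' (K - j) ∧ b (K - j) = b' (K - j)) →
    fMat K t r b = fMat K t r' b' := by
  intro t
  induction t with
  | zero => intros; rfl
  | succ t ih =>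
    intro r r' b b' h
    match t, ih with
    | 0, _ =>
      simp only [fMat]
      have h0 := (h 0 (by omega)).1
      rw [Nat.sub_zero] at h0
      exact_mod_cast h0
    | t+1, ih =>
      simp only [fMat]
      have hr := (h (t+1) (by omega)).1
      have hb := (h (t+1) (by omega)).2
      have hrec : fMat K (t+1) r (fun i => min (b i) (2*(K-i)))
          = fMat K (t+1) r' (fun i => min (b' i) (2*(K-i))) := by
        apply ih
        intro j hj
        exact ⟨(h j (by omega)).1, by rw [(h j (by omega)).2]⟩
      rw [hrec, hr, hb]

lemma fMat_zero (K : ℕ) : ∀ t, fMat K t (fun _ => 0) (fun _ => 0) = 0 := by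
  intro t
  induction t with
  | zero => rfl
  | succ t ih =>
    match t, ih with
    | 0, _ => simp [fMat]
    | t+1, ih =>
      simp only [fMat]
      have hrec : fMat K (t+1) (fun _ => 0) (fun i => min ((fun _ => 0) i) (2*(K-i))) = 0 := by
        rw [fMat_congr K (t+1) _ (fun _ => 0) _ (fun _ => 0)]
        · exact ih
        · intro j hj; simp
      simp only at hrec ⊢
      rw [hrec]
      have hfac : (Nat.factorial (2 * (t + 2) - 1) : ℤ)
          = (Nat.factorial (2 * (t + 1) - 1) : ℤ) * (2*(t:ℤ)+2) * (2*(t:ℤ)+3) := by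
        have : 2 * (t + 2) - 1 = (2 * (t + 1) - 1) + 1 + 1 := by omega
        rw [this, Nat.factorial_succ, Nat.factorial_succ]
        push_cast
        have : (2 * (t + 1) - 1 : ℕ) = (2*t+1 : ℕ) := by omega
        rw [this]; push_cast; ring
      rw [hfac]; simp; ring

theorem fMat_indistinguishable (K t : ℕ) (ht2 : 2 ≤ t) (htK : t ≤ K) (b : ℕ) :
    fMat K t (fun i => if i = K - (t - 1) then 1 else 0)
        (fun i => if i = K - (t - 1) then b else 0) =
      fMat K t (fun _ => 0) (fun i => if i = K - (t - 1) then b + 1 else 0) := by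
  obtain ⟨n, rfl⟩ : ∃ n, t = n + 2 := ⟨t - 2, by omega⟩
  have hK : n + 2 ≤ K := htK
  have hsub : n + 2 - 1 = n + 1 := rfl
  have hidx : K - (K - (n+1)) = n + 1 := by omega
  have hinner1 : fMat K (n+1) (fun i => if i = K - (n+1) then 1 else 0)
      (fun i => min (if i = K - (n+1) then b else 0) (2*(K-i))) = 0 := by
    rw [fMat_congr K (n+1) _ (fun _ => 0) _ (fun _ => 0) ?_, fMat_zero]
    intro j hj
    have hne : K - j ≠ K - (n+1) := by omega
    simp [hne]
  have hinner2 : fMat K (n+1) (fun _ => 0)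
      (fun i => min (if i = K - (n+1) then b+1 else 0) (2*(K-i))) = 0 := by
    rw [fMat_congr K (n+1) _ (fun _ => 0) _ (fun _ => 0) ?_, fMat_zero]
    intro j hj
    have hne : K - j ≠ K - (n+1) := by omega
    simp [hne]
  simp only [hsub, fMat, hinner1, hinner2, hidx, if_pos, ite_true]
  rcases le_or_gt (2*(n+1)) b with hb | hb
  · rw [min_eq_right hb, min_eq_right (by omega : 2*(n+1) ≤ b+1)]
    push_cast
    ring
  · rw [min_eq_left (by omega : b ≤ 2*(n+1)), min_eq_left (by omega : b+1 ≤ 2*(n+1))]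
    push_cast
    ring
end

section
/- For each t with 2 ≤ t ≤ K, we have f_t(1,0,…,0; 0,…,0) = 2·(2t-2)! and f_t(0,…,0; 1,0,…,0) = 2·(2t-2)!. -/
lemma fact_step (t : ℕ) :
    (Nat.factorial (2 * (t + 2) - 1) : ℤ) =
      (2 * (t : ℤ) + 3) * (2 * (t : ℤ) + 2) * (Nat.factorial (2 * (t + 1) - 1) : ℤ) := by
  have h1 : 2 * (t + 2) - 1 = (2 * t + 2) + 1 := by omega
  have h2 : 2 * (t + 1) - 1 = 2 * t + 1 := by omega
  rw [h1, h2, Nat.factorial_succ, Nat.factorial_succ]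
  push_cast
  ring

lemma fMat_zero_s15 (K : ℕ) : ∀ n, 1 ≤ n → n ≤ K → ∀ r b : ℕ → ℕ,
    (∀ i, K - n < i → r i = 0) → (∀ i, K - n < i → b i = 0) →
    fMat K n r b = 0 := by
  intro n
  induction n with
  | zero => omega
  | succ m ih =>
    match m with
    | 0 =>
      intro _ hK r b hr hb
      simp [fMat, hr K (by omega)]
    | t + 1 =>
      intro _ hK r b hr hb
      have hr' : r (K - (t + 1)) = 0 := hr _ (by omega)
      have hb' : b (K - (t + 1)) = 0 := hb _ (by omega)
      have hrec : fMat K (t + 1) r (fun i => min (b i) (2 * (K - i))) = 0 := by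
        apply ih (by omega) (by omega)
        · intro i hi; exact hr i (by omega)
        · intro i hi; simp [hb i (by omega)]
      simp only [fMat, hrec, hr', hb', Nat.zero_min, Nat.cast_zero]
      rw [fact_step t]
      push_cast
      ring

theorem fMat_single_element_values (K t : ℕ) (ht2 : 2 ≤ t) (htK : t ≤ K) :
    fMat K t (fun i => if i = K - (t - 1) then 1 else 0) (fun _ => 0) =
      2 * (Nat.factorial (2 * t - 2) : ℤ) ∧
    fMat K t (fun _ => 0) (fun i => if i = K - (t - 1) then 1 else 0) =
      2 * (Nat.factorial (2 * t - 2) : ℤ) := by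
  obtain ⟨u, rfl⟩ : ∃ u, t = u + 2 := ⟨t - 2, by omega⟩
  have hsub : u + 2 - 1 = u + 1 := by omega
  have hKK : K - (K - (u + 1)) = u + 1 := by omega
  have hfact : (Nat.factorial (2 * (u + 2) - 2) : ℤ) =
      (2 * (u : ℤ) + 2) * (Nat.factorial (2 * (u + 1) - 1) : ℤ) := by
    have h1 : 2 * (u + 2) - 2 = (2 * u + 1) + 1 := by omega
    have h2 : 2 * (u + 1) - 1 = 2 * u + 1 := by omega
    rw [h1, h2, Nat.factorial_succ]
    push_cast; ring
  constructor
  · have hrec : fMat K (u + 1)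
        (fun i => if i = K - (u + 1) then 1 else 0) (fun i => 0) = 0 := by
      apply fMat_zero_s15 K (u + 1) (by omega) (by omega)
      · intro i hi
        have : i ≠ K - (u + 1) := by omega
        simp [this]
      · intro i hi; rfl
    simp only [fMat, hsub, Nat.zero_min, Nat.cast_zero, hrec, if_pos rfl, Nat.cast_one]
    rw [fact_step u, hfact]
    push_cast
    ring
  · have hrec : fMat K (u + 1) (fun _ => (0:ℕ))
        (fun i => min (if i = K - (u + 1) then 1 else 0) (2 * (K - i))) = 0 := by
      apply fMat_zero_s15 K (u + 1) (by omega) (by omega)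
      · intro i hi; rfl
      · intro i hi
        have : i ≠ K - (u + 1) := by omega
        simp [this]
    have h1 : min (1:ℕ) (2 * (u + 1)) = 1 := by omega
    simp only [fMat, hsub, hrec, eq_self_iff_true, if_true, hKK, h1,
      Nat.cast_zero, Nat.cast_one]
    rw [fact_step u, hfact]
    push_cast
    ring
end

section
/- Let M be a matroid, let I, O, T = {e₁,…,e_{|T|}} be sets with I ∪ T independent and I ∪ O independent, and let o₁ ∈ O. Suppose that for each eᵢ ∈ T, the set I ∪ O + eᵢ contains a circuit Cᵢ with o₁ ∉ Cᵢ. Then I ∪ T + o₁ is independent. -/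
/-- A circuit of a matroid: a minimal dependent set. -/
def Matroid.IsCircuitSet {α : Type*} (M : Matroid α) (C : Set α) : Prop :=
  M.Dep C ∧ ∀ D ⊂ C, M.Indep D

theorem indep_insert_of_circuits_avoid {α : Type*} (M : Matroid α) (hfin : M.E.Finite)
    (I O T : Set α) (o₁ : α) (ho₁ : o₁ ∈ O)
    (hIT : M.Indep (I ∪ T)) (hIO : M.Indep (I ∪ O))
    (hT : ∀ e ∈ T, ∃ C : Set α, M.IsCircuitSet C ∧ C ⊆ insert e (I ∪ O) ∧ o₁ ∉ C) :
    M.Indep (insert o₁ (I ∪ T)) := by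
  by_cases h1 : o₁ ∈ I ∪ T
  · rwa [Set.insert_eq_self.mpr h1]
  set J : Set α := (I ∪ O) \ {o₁} with hJ
  have hsub : I ∪ T ⊆ M.closure J := by
    rintro x (hx | hx)
    · apply M.subset_closure J (fun y hy => hIO.subset_ground hy.1)
      exact ⟨Or.inl hx, fun hxo => h1 (hxo ▸ Or.inl hx)⟩
    · obtain ⟨C, ⟨hCdep, hCmin⟩, hCsub, hCo⟩ := hT x hx
      have hxC : x ∈ C := by
        by_contra hxC
        have : C ⊆ I ∪ O := fun y hy => by
          rcases hCsub hy with h | h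
          · exact absurd (h ▸ hy) hxC
          · exact h
        exact hCdep.not_indep (hIO.subset this)
      have hCx : M.Indep (C \ {x}) := hCmin _ (Set.sdiff_singleton_ssubset.mpr hxC)
      have hCdep' : M.Dep (insert x (C \ {x})) := by
        rwa [Set.insert_diff_singleton, Set.insert_eq_self.mpr hxC]
      have hxcl : x ∈ M.closure (C \ {x}) := ((hCx.insert_dep_iff).mp hCdep').1
      have hCJ : C \ {x} ⊆ J := by
        rintro y ⟨hyC, hyx⟩
        rcases hCsub hyC with h | h
        · exact absurd h hyx
        · exact ⟨h, fun h' => hCo (h' ▸ hyC)⟩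
      exact M.closure_subset_closure hCJ hxcl
  have hcl : M.closure (I ∪ T) ⊆ M.closure J :=
    M.closure_subset_closure_of_subset_closure hsub
  have ho₁cl : o₁ ∉ M.closure (I ∪ T) := by
    intro h
    exact hIO.notMem_closure_diff_of_mem (Or.inr ho₁) (hcl h)
  rw [hIT.insert_indep_iff]
  exact Or.inl ⟨hIO.subset_ground (Or.inr ho₁), ho₁cl⟩
end

section
/- Let f be a monotone submodular function with f(∅) = 0 on a finite linearly ordered ground set E. For positive integers k and s and v ≥ 0, the procedure Cardinality(k, s, v, f) applied to any stream satisfies: whenever there exists a set OPT ⊆ E with f(OPT) ≥ v and |OPT| ≤ k, the returned set S satisfies f(S) ≥ (s/(k+s−1))·v and |S| ≤ s. -/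
open scoped Classical

/-- The single element of `T` maximizing `g` on singletons (an arbitrary maximizer),
or `∅` if `T` is empty. -/
noncomputable def argmaxSingle {n : ℕ} (g : Finset (Fin n) → ℝ) (T : Finset (Fin n)) :
    Finset (Fin n) :=
  if h : T.Nonempty then {Classical.choose (T.exists_max_image (fun e => g {e}) h)} else ∅

/-- The streaming procedure `Cardinality(k, s, v, g)` applied to the stream `T`
(elements of `Fin n` arrive in increasing order).  If `k = 1` or `s = 1`, it returns the
element maximizing `g`.  Otherwise, Branch 1 takes the first element `e` of the stream
with `g({e}) ≥ v/(k+s-1)` (if any), recurses with parameters `(k, s-1, v - g({e}))` and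
function `g(· | e)` on the elements after `e`, and adds `e` to the result; Branch 2
recurses with parameters `(k-1, s, ((k+s-2)/(k+s-1))·v)` and function `g` on the whole
stream; the better of the two outcomes (w.r.t. `g`) is returned. -/
noncomputable def Cardinality {n : ℕ} (k s : ℕ) (v : ℝ) (g : Finset (Fin n) → ℝ)
    (T : Finset (Fin n)) : Finset (Fin n) :=
  if h : k ≤ 1 ∨ s ≤ 1 then argmaxSingle g T
  else
    let F := T.filter (fun e => v / ((k : ℝ) + s - 1) ≤ g {e})
    let S₁ : Finset (Fin n) :=
      if hF : F.Nonempty then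
        let e := F.min' hF
        insert e (Cardinality k (s - 1) (v - g {e})
          (fun A => g (insert e A) - g {e}) (T.filter (fun x => e < x)))
      else ∅
    let S₂ := Cardinality (k - 1) s (((k : ℝ) + s - 2) / ((k : ℝ) + s - 1) * v) g T
    if g S₂ < g S₁ then S₁ else S₂
  termination_by k + s
  decreasing_by all_goals omega

/-
Induction on `k + s`, with threshold `τ = v / (k + s - 1)`. If some `o ∈ OPT` has `f {o} ≤ τ`,
then `OPT \ {o}` is a `(k - 1)`-set of value at least `v - τ = (k + s - 2) / (k + s - 1) · v`,
and branch 2 reaches the bound by induction. Otherwise every element of `OPT` passes the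
threshold, so the first element `e` of the stream passing it precedes all of `OPT`; then
`OPT \ {e}` has value at least `v - f {e}` for `f (· | e)` on the rest of the stream, and
branch 1 collects `f {e} + (s - 1) / (k + s - 2) · (v - f {e}) ≥ s / (k + s - 1) · v`
because `f {e} ≥ τ`. For `v ≤ 0` there is nothing to prove.
-/

structure IsNormalizedMonotoneSubmodular {α : Type*} [DecidableEq α] (g : Finset α → ℝ) :
    Prop where
  mono : Monotone g
  submodular : ∀ A B, g (A ∪ B) + g (A ∩ B) ≤ g A + g B
  map_empty : g ∅ = 0

def marginal {α : Type*} [DecidableEq α] (g : Finset α → ℝ) (e : α) (A : Finset α) : ℝ :=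
  g (insert e A) - g {e}

namespace IsNormalizedMonotoneSubmodular

variable {α : Type*} [DecidableEq α] {g : Finset α → ℝ}

theorem nonneg (hg : IsNormalizedMonotoneSubmodular g) (A : Finset α) : 0 ≤ g A :=
  hg.map_empty ▸ hg.mono (Finset.empty_subset A)

theorem le_erase_add_singleton (hg : IsNormalizedMonotoneSubmodular g) {A : Finset α} {a : α}
    (ha : a ∈ A) : g A ≤ g (A.erase a) + g {a} := by
  have h := hg.submodular {a} (A.erase a)
  rw [← Finset.insert_eq, Finset.insert_erase ha,
    Finset.singleton_inter_of_notMem (Finset.notMem_erase a A), hg.map_empty] at h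
  linarith

theorem le_sum_singleton (hg : IsNormalizedMonotoneSubmodular g) (A : Finset α) :
    g A ≤ ∑ a ∈ A, g {a} := by
  induction A using Finset.induction_on with
  | empty => simp [hg.map_empty]
  | insert a A ha ih =>
    have h := hg.le_erase_add_singleton (Finset.mem_insert_self a A)
    rw [Finset.erase_insert ha] at h
    rw [Finset.sum_insert ha]
    linarith

theorem marginal (hg : IsNormalizedMonotoneSubmodular g) (e : α) :
    IsNormalizedMonotoneSubmodular (marginal g e) where
  mono _ _ hAB := sub_le_sub_right (hg.mono (Finset.insert_subset_insert e hAB)) _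
  submodular A B := by
    have h := hg.submodular (insert e A) (insert e B)
    rw [← Finset.insert_union_distrib, ← Finset.insert_inter_distrib] at h
    simp only [_root_.marginal]
    linarith
  map_empty := by simp [_root_.marginal]

end IsNormalizedMonotoneSubmodular

section argmaxSingle

variable {n : ℕ} {g : Finset (Fin n) → ℝ} {T : Finset (Fin n)}

theorem card_argmaxSingle_le_one : (argmaxSingle g T).card ≤ 1 := by
  unfold argmaxSingle
  split_ifs <;> simp

theorem le_argmaxSingle {x : Fin n} (hx : x ∈ T) : g {x} ≤ g (argmaxSingle g T) := by
  have hT : T.Nonempty := ⟨x, hx⟩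
  rw [argmaxSingle, dif_pos hT]
  exact (Classical.choose_spec (T.exists_max_image (fun e => g {e}) hT)).2 x hx

theorem IsNormalizedMonotoneSubmodular.le_card_mul_argmaxSingle
    (hg : IsNormalizedMonotoneSubmodular g) {A : Finset (Fin n)} (hA : A ⊆ T) :
    g A ≤ A.card * g (argmaxSingle g T) := by
  calc g A ≤ ∑ a ∈ A, g {a} := hg.le_sum_singleton A
    _ ≤ A.card • g (argmaxSingle g T) :=
      Finset.sum_le_card_nsmul _ _ _ fun a ha => le_argmaxSingle (hA ha)
    _ = A.card * g (argmaxSingle g T) := nsmul_eq_mul _ _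

end argmaxSingle

namespace Cardinality

theorem drop_ratio_mul {k s : ℝ} (h : k + s - 2 ≠ 0) (v : ℝ) :
    s / (k - 1 + s - 1) * ((k + s - 2) / (k + s - 1) * v) = s / (k + s - 1) * v := by
  rw [show k - 1 + s - 1 = k + s - 2 by ring, ← mul_assoc, div_mul_div_cancel₀ h]

theorem ratio_mul_le_of_take {k s v t x : ℝ} (hk : 1 ≤ k) (hs : 1 < s)
    (ht : v / (k + s - 1) ≤ t) (hx : (s - 1) / (k + s - 2) * (v - t) ≤ x - t) :
    s / (k + s - 1) * v ≤ x := by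
  have ha : 0 < k + s - 2 := by linarith
  have hb : 0 < k + s - 1 := by linarith
  rw [div_le_iff₀ hb] at ht
  rw [div_mul_eq_mul_div, div_le_iff₀ ha] at hx
  rw [div_mul_eq_mul_div, div_le_iff₀ hb]
  have hk' : 0 ≤ k - 1 := by linarith
  nlinarith [mul_le_mul_of_nonneg_left hx hb.le, mul_le_mul_of_nonneg_left ht hk']

theorem ratio_nonneg (k s : ℕ) : 0 ≤ (s : ℝ) / (k + s - 1) := by
  rcases Nat.eq_zero_or_pos s with rfl | hs
  · simp
  · have hs' : (1 : ℝ) ≤ s := by exact_mod_cast hs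
    exact div_nonneg s.cast_nonneg (by linarith [k.cast_nonneg (α := ℝ)])

theorem ratio_le_inv_of_base {k s : ℕ} (hk : 1 ≤ k) (h : k ≤ 1 ∨ s ≤ 1) :
    (s : ℝ) / (k + s - 1) ≤ (k : ℝ)⁻¹ := by
  rcases h with h | h
  · obtain rfl : k = 1 := by omega
    simpa using div_self_le_one (s : ℝ)
  · interval_cases s <;> simp

variable {n : ℕ} {k s : ℕ} {v : ℝ} {g : Finset (Fin n) → ℝ} {T : Finset (Fin n)}

theorem card_le (hs : 1 ≤ s) : (Cardinality k s v g T).card ≤ s := by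
  fun_induction Cardinality k s v g T with
  | case1 => exact card_argmaxSingle_le_one.trans hs
  | case2 k s v g T _ _ S₁ _ _ ih₁ _ =>
    simp only [S₁]
    split_ifs with hF
    · exact (Finset.card_insert_le _ _).trans (by have := ih₁ hF (by omega); omega)
    · simp
  | case3 _ _ _ _ _ _ _ _ _ _ _ ih₂ => exact ih₂ hs

theorem eq_argmaxSingle (hbase : k ≤ 1 ∨ s ≤ 1) :
    Cardinality k s v g T = argmaxSingle g T := by
  rw [Cardinality, dif_pos hbase]

theorem drop_le (hk : 2 ≤ k) (hs : 2 ≤ s) :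
    g (Cardinality (k - 1) s ((k + s - 2) / (k + s - 1) * v) g T) ≤
      g (Cardinality k s v g T) := by
  rw [Cardinality.eq_def k s v g T, dif_neg (by omega)]
  dsimp only
  split_ifs <;> linarith

theorem take_le {e : Fin n} (hk : 2 ≤ k) (hs : 2 ≤ s) (he : e ∈ T)
    (hthr : v / (k + s - 1) ≤ g {e})
    (hfirst : ∀ x ∈ T, v / (k + s - 1) ≤ g {x} → e ≤ x) :
    g (insert e (Cardinality k (s - 1) (v - g {e}) (marginal g e) (T.filter (e < ·)))) ≤
      g (Cardinality k s v g T) := by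
  unfold marginal
  set F := T.filter fun x => v / (k + s - 1) ≤ g {x}
  have heF : e ∈ F := Finset.mem_filter.2 ⟨he, hthr⟩
  have hF : F.Nonempty := ⟨e, heF⟩
  have hmin : F.min' hF = e :=
    le_antisymm (F.min'_le e heF) (F.le_min' hF e fun x hx => hfirst x (Finset.mem_filter.1 hx).1
      (Finset.mem_filter.1 hx).2)
  rw [Cardinality.eq_def k s v g T, dif_neg (by omega)]
  dsimp only
  rw [dif_pos hF, hmin]
  split_ifs <;> linarith

theorem value_guarantee_of_base (hg : IsNormalizedMonotoneSubmodular g) {OPT : Finset (Fin n)}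
    (hOPT : OPT ⊆ T) (hval : v ≤ g OPT) (hcard : OPT.card ≤ k) (hk : 1 ≤ k) (hv : 0 ≤ v)
    (hbase : k ≤ 1 ∨ s ≤ 1) :
    (s : ℝ) / (k + s - 1) * v ≤ g (Cardinality k s v g T) := by
  rw [eq_argmaxSingle hbase]
  have hvk : v ≤ k * g (argmaxSingle g T) := hval.trans <|
    (hg.le_card_mul_argmaxSingle hOPT).trans <|
      mul_le_mul_of_nonneg_right (by exact_mod_cast hcard) (hg.nonneg _)
  calc (s : ℝ) / (k + s - 1) * v ≤ (k : ℝ)⁻¹ * v :=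
        mul_le_mul_of_nonneg_right (ratio_le_inv_of_base hk hbase) hv
    _ ≤ g (argmaxSingle g T) := by rwa [inv_mul_le_iff₀ (by exact_mod_cast hk)]

theorem value_guarantee (hg : IsNormalizedMonotoneSubmodular g) {OPT : Finset (Fin n)}
    (hOPT : OPT ⊆ T) (hval : v ≤ g OPT) (hcard : OPT.card ≤ k) :
    (s : ℝ) / (k + s - 1) * v ≤ g (Cardinality k s v g T) := by
  induction hN : k + s using Nat.strong_induction_on generalizing k s v g T OPT with
  | _ N ih =>
  subst hN
  rcases le_or_gt v 0 with hv | hv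
  · exact (mul_nonpos_of_nonneg_of_nonpos (ratio_nonneg k s) hv).trans (hg.nonneg _)
  have hOPTne : OPT.Nonempty :=
    Finset.nonempty_iff_ne_empty.2 fun h => by rw [h, hg.map_empty] at hval; linarith
  have hk : 1 ≤ k := hcard.trans' (Finset.one_le_card.2 hOPTne)
  by_cases hbase : k ≤ 1 ∨ s ≤ 1
  · exact value_guarantee_of_base hg hOPT hval hcard hk hv.le hbase
  have hk2 : 2 ≤ k := by omega
  have hs2 : 2 ≤ s := by omega
  have hkR : (2 : ℝ) ≤ k := by exact_mod_cast hk2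
  have hsR : (2 : ℝ) ≤ s := by exact_mod_cast hs2
  by_cases hsmall : ∃ o ∈ OPT, g {o} ≤ v / (k + s - 1)
  · obtain ⟨o, ho, hgo⟩ := hsmall
    have hval' : (k + s - 2) / (k + s - 1) * v ≤ g (OPT.erase o) := by
      have hb : (k : ℝ) + s - 1 ≠ 0 := by linarith
      rw [show ((k : ℝ) + s - 2) / (k + s - 1) * v = v - v / (k + s - 1) by field_simp; ring]
      linarith [hg.le_erase_add_singleton ho]
    have hcard' : (OPT.erase o).card ≤ k - 1 := by rw [Finset.card_erase_of_mem ho]; omega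
    have hrec := ih (k - 1 + s) (by omega) hg ((OPT.erase_subset o).trans hOPT) hval' hcard' rfl
    have ha : (k : ℝ) + s - 2 ≠ 0 := by linarith
    rw [Nat.cast_sub hk, Nat.cast_one, drop_ratio_mul ha] at hrec
    exact hrec.trans (drop_le hk2 hs2)
  · push Not at hsmall
    set F := T.filter fun x => v / (k + s - 1) ≤ g {x}
    have hOPTF : OPT ⊆ F := fun o ho => Finset.mem_filter.2 ⟨hOPT ho, (hsmall o ho).le⟩
    obtain ⟨e, heF, hfirst⟩ := F.exists_min_image id (hOPTne.mono hOPTF)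
    obtain ⟨he, hthr⟩ := Finset.mem_filter.1 heF
    have hOPT' : OPT.erase e ⊆ T.filter (e < ·) := fun x hx => by
      obtain ⟨hxe, hxO⟩ := Finset.mem_erase.1 hx
      exact Finset.mem_filter.2 ⟨hOPT hxO, (hfirst x (hOPTF hxO)).lt_of_ne' hxe⟩
    have hval' : v - g {e} ≤ marginal g e (OPT.erase e) :=
      sub_le_sub_right (hval.trans (hg.mono (OPT.insert_erase_subset e))) _
    have hrec := ih (k + (s - 1)) (by omega) (hg.marginal e) hOPT' hval'
      (Finset.card_erase_le.trans hcard) rfl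
    rw [Nat.cast_sub (by omega : 1 ≤ s), Nat.cast_one,
      show (k : ℝ) + (s - 1) - 1 = k + s - 2 by ring] at hrec
    refine le_trans ?_ <|
      take_le hk2 hs2 he hthr fun x hx hxthr => hfirst x (Finset.mem_filter.2 ⟨hx, hxthr⟩)
    exact ratio_mul_le_of_take (by linarith) (by linarith) hthr hrec

end Cardinality

theorem cardinality_procedure_guarantee_general {n : ℕ} (f : Finset (Fin n) → ℝ)
    (hmono : ∀ A B : Finset (Fin n), A ⊆ B → f A ≤ f B)
    (hsub : ∀ A B : Finset (Fin n), f (A ∪ B) + f (A ∩ B) ≤ f A + f B)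
    (hempty : f ∅ = 0)
    (k s : ℕ) (hs : 1 ≤ s) (v : ℝ)
    (T : Finset (Fin n)) (OPT : Finset (Fin n)) (hOPT : OPT ⊆ T)
    (hval : v ≤ f OPT) (hcard : OPT.card ≤ k) :
    (s : ℝ) / ((k : ℝ) + s - 1) * v ≤ f (Cardinality k s v f T) ∧
      (Cardinality k s v f T).card ≤ s :=
  ⟨Cardinality.value_guarantee ⟨fun A B => hmono A B, hsub, hempty⟩ hOPT hval hcard,
    Cardinality.card_le hs⟩

theorem cardinality_procedure_guarantee {n : ℕ} (f : Finset (Fin n) → ℝ)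
    (hmono : ∀ A B : Finset (Fin n), A ⊆ B → f A ≤ f B)
    (hsub : ∀ A B : Finset (Fin n), f (A ∪ B) + f (A ∩ B) ≤ f A + f B)
    (hempty : f ∅ = 0)
    (k s : ℕ) (hk : 1 ≤ k) (hs : 1 ≤ s) (v : ℝ) (hv : 0 ≤ v)
    (T : Finset (Fin n)) (OPT : Finset (Fin n)) (hOPT : OPT ⊆ T)
    (hval : v ≤ f OPT) (hcard : OPT.card ≤ k) :
    (s : ℝ) / ((k : ℝ) + s - 1) * v ≤ f (Cardinality k s v f T) ∧
      (Cardinality k s v f T).card ≤ s :=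
  cardinality_procedure_guarantee_general f hmono hsub hempty k s hs v T OPT hOPT hval hcard
end
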